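/- Let A be an n×n matrix over a field with Ax = b having a unique solution x, and suppose the 2×2 Chiò condensation (with pivot a_{nn} ≠ 0) is applied to the augmented system: e_{ij} = a_{ij}a_{nn} − a_{in}a_{nj} and b'_i = b_i a_{nn} − a_{in} b_n for i,j = 1,…,n−1. Then the system E y = b' has the unique solution y = (x_1,…,x_{n−1}). -/

import Mathlib

/-!
Write `a` for the pivot `A (last) (last)`. For every vector `z`, row `i` of the condensed system
evaluated at the truncation of `z` equals `a · (A z)ᵢ - A_{i,last} · (A z)_last`: the terms in
`z_last` cancel. Hence truncating a solution of `A z = b` solves the condensed system. Conversely,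
a solution `y` of the condensed system extends, by choosing its last coordinate so that the last
equation holds (possible as `a ≠ 0`), to a solution of `A z = b`; cancelling `a` gives the other
equations. Uniqueness for `A` then forces `y` to be the truncation of `x`.
-/

open Matrix

namespace Matrix

section CommRing

variable {R : Type*} [CommRing R] {m : ℕ}

def chioCondensation (A : Matrix (Fin (m + 1)) (Fin (m + 1)) R) : Matrix (Fin m) (Fin m) R :=
  of fun i j => A i.castSucc j.castSucc * A (Fin.last m) (Fin.last m) -
    A i.castSucc (Fin.last m) * A (Fin.last m) j.castSucc

def chioCondensationRhs (A : Matrix (Fin (m + 1)) (Fin (m + 1)) R) (b : Fin (m + 1) → R) :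
    Fin m → R :=
  fun i => b i.castSucc * A (Fin.last m) (Fin.last m) - A i.castSucc (Fin.last m) * b (Fin.last m)

theorem mulVec_fin_succ (A : Matrix (Fin (m + 1)) (Fin (m + 1)) R) (z : Fin (m + 1) → R)
    (i : Fin (m + 1)) :
    (A *ᵥ z) i = ∑ j : Fin m, A i j.castSucc * z j.castSucc + A i (Fin.last m) * z (Fin.last m) :=
  Fin.sum_univ_castSucc _

theorem chioCondensation_mulVec (A : Matrix (Fin (m + 1)) (Fin (m + 1)) R)
    (z : Fin (m + 1) → R) (i : Fin m) :
    (chioCondensation A *ᵥ fun j => z j.castSucc) i =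
      A (Fin.last m) (Fin.last m) * (A *ᵥ z) i.castSucc -
        A i.castSucc (Fin.last m) * (A *ᵥ z) (Fin.last m) := by
  set a := A (Fin.last m) (Fin.last m)
  have hsum : (chioCondensation A *ᵥ fun j => z j.castSucc) i =
      ∑ j : Fin m, a * (A i.castSucc j.castSucc * z j.castSucc) -
        ∑ j : Fin m, A i.castSucc (Fin.last m) * (A (Fin.last m) j.castSucc * z j.castSucc) := by
    rw [← Finset.sum_sub_distrib, mulVec, dotProduct]
    exact Finset.sum_congr rfl fun j _ => by simp only [chioCondensation, of_apply]; ring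
  rw [hsum, mulVec_fin_succ, mulVec_fin_succ, mul_add, mul_add, Finset.mul_sum, Finset.mul_sum]
  ring

theorem chioCondensation_mulVec_eq_of_mulVec_eq {A : Matrix (Fin (m + 1)) (Fin (m + 1)) R}
    {b z : Fin (m + 1) → R} (hz : A *ᵥ z = b) :
    (chioCondensation A *ᵥ fun j => z j.castSucc) = chioCondensationRhs A b := by
  funext i
  rw [chioCondensation_mulVec, hz, chioCondensationRhs, mul_comm]

end CommRing

section Field

variable {F : Type*} [Field F] {m : ℕ}

theorem exists_mulVec_snoc_eq_of_chioCondensation_mulVec_eq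
    {A : Matrix (Fin (m + 1)) (Fin (m + 1)) F} (ha : A (Fin.last m) (Fin.last m) ≠ 0)
    {b : Fin (m + 1) → F} {y : Fin m → F} (hy : chioCondensation A *ᵥ y = chioCondensationRhs A b) :
    ∃ t, A *ᵥ Fin.snoc y t = b := by
  set a := A (Fin.last m) (Fin.last m)
  let t := (b (Fin.last m) - ∑ j : Fin m, A (Fin.last m) j.castSucc * y j) / a
  have hlast : (A *ᵥ Fin.snoc y t) (Fin.last m) = b (Fin.last m) := by
    simp only [mulVec_fin_succ, Fin.snoc_castSucc, Fin.snoc_last, t]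
    field_simp
    ring
  refine ⟨t, funext fun i => Fin.lastCases hlast (fun i => ?_) i⟩
  have hrow := congrFun hy i
  have hcond := chioCondensation_mulVec A (Fin.snoc y t) i
  simp only [Fin.snoc_castSucc] at hcond
  rw [hcond, hlast, chioCondensationRhs] at hrow
  exact mul_left_cancel₀ ha (by linear_combination hrow)

end Field

end Matrix

/-- Chiò condensation applied to a linear system: if `x` is the unique solution
of `Ax = b` and the pivot `a_{nn} ≠ 0`, then with
`e_{ij} = a_{ij}a_{nn} - a_{in}a_{nj}` and `b'_i = b_i a_{nn} - a_{in} b_n`,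
the system `E y = b'` has `(x_1,…,x_{n-1})` as its unique solution. -/
theorem chio_system_equiv {F : Type*} [Field F] {n : ℕ}
    (A : Matrix (Fin n) (Fin n) F) (b x : Fin n → F)
    (lastIdx : Fin n) (hlast : (lastIdx : ℕ) = n - 1)
    (ha : A lastIdx lastIdx ≠ 0)
    (hx : A.mulVec x = b) (huniq : ∀ z, A.mulVec z = b → z = x)
    (E : Matrix (Fin (n - 1)) (Fin (n - 1)) F)
    (hE : ∀ i j : Fin (n - 1),
      E i j = A ⟨i, by have := i.isLt; omega⟩ ⟨j, by have := j.isLt; omega⟩ * A lastIdx lastIdx -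
        A ⟨i, by have := i.isLt; omega⟩ lastIdx * A lastIdx ⟨j, by have := j.isLt; omega⟩)
    (b' : Fin (n - 1) → F)
    (hb' : ∀ i : Fin (n - 1),
      b' i = b ⟨i, by have := i.isLt; omega⟩ * A lastIdx lastIdx -
        A ⟨i, by have := i.isLt; omega⟩ lastIdx * b lastIdx) :
    E.mulVec (fun i : Fin (n - 1) => x ⟨i, by have := i.isLt; omega⟩) = b' ∧
      ∀ y : Fin (n - 1) → F, E.mulVec y = b' →
        y = fun i : Fin (n - 1) => x ⟨i, by have := i.isLt; omega⟩ := by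
  obtain ⟨m, rfl⟩ : ∃ m, n = m + 1 := ⟨n - 1, by have := lastIdx.pos; omega⟩
  obtain rfl : lastIdx = Fin.last m := Fin.ext (by simpa using hlast)
  obtain rfl : E = chioCondensation A := Matrix.ext hE
  obtain rfl : b' = chioCondensationRhs A b := funext hb'
  refine ⟨chioCondensation_mulVec_eq_of_mulVec_eq hx, fun y hy => ?_⟩
  obtain ⟨t, ht⟩ := exists_mulVec_snoc_eq_of_chioCondensation_mulVec_eq ha hy
  funext i
  exact (Fin.snoc_castSucc (α := fun _ => F) ..).symm.trans (congrFun (huniq _ ht) i.castSucc)
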